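/- Let n ≥ 1, k > 0, c > 0, ω_f > 0, α ∈ [0,1], let h₁ ∈ ℝⁿ be nonzero with ĥ₁ := h₁/‖h₁‖, let H be a symmetric positive definite real n×n matrix, set M := k(Iₙ − α ĥ₁ ĥ₁ᵀ) and c̃ := c α/‖h₁‖². Then the (2n+1)×(2n+1) real block matrix X = [[0, −M, −c̃ h₁], [ω_f H, −ω_f Iₙ, 0], [ω_f h₁ᵀ, 0, −ω_f]] is Hurwitz, i.e., every complex eigenvalue of X has strictly negative real part. -/

import Mathlib

noncomputable section
open Matrix Polynomial

/-- `μ ∈ ℂ` is an eigenvalue of the real matrix `A`, i.e. a root of its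
characteristic polynomial over `ℂ`. -/
def IsEig {m : Type} [Fintype m] [DecidableEq m] (A : Matrix m m ℝ) (μ : ℂ) : Prop :=
  ((A.charpoly).map (algebraMap ℝ ℂ)).IsRoot μ

/-- The normalized vector `ĥ₁ = h₁/‖h₁‖`. -/
def hhat (n : ℕ) (h₁ : Fin n → ℝ) : Fin n → ℝ := (Real.sqrt (h₁ ⬝ᵥ h₁))⁻¹ • h₁

/-- `M = k(I − α ĥ₁ĥ₁ᵀ)`. -/
def Mmat (n : ℕ) (k α : ℝ) (h₁ : Fin n → ℝ) : Matrix (Fin n) (Fin n) ℝ :=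
  k • ((1 : Matrix (Fin n) (Fin n) ℝ) - α • Matrix.vecMulVec (hhat n h₁) (hhat n h₁))

/-- The `(2n+1) × (2n+1)` block matrix
`X = [[0, −M, −c̃ h₁], [ω_f H, −ω_f Iₙ, 0], [ω_f h₁ᵀ, 0, −ω_f]]`. -/
def Xmat (n : ℕ) (ωf ctil : ℝ) (h₁ : Fin n → ℝ) (M H : Matrix (Fin n) (Fin n) ℝ) :
    Matrix ((Fin n ⊕ Fin n) ⊕ Unit) ((Fin n ⊕ Fin n) ⊕ Unit) ℝ :=
  Matrix.fromBlocks
    (Matrix.fromBlocks 0 (-M) (ωf • H) (-(ωf • (1 : Matrix (Fin n) (Fin n) ℝ))))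
    (Matrix.of fun i (_ : Unit) => Sum.elim (fun j => -(ctil * h₁ j)) (fun _ => (0 : ℝ)) i)
    (Matrix.of fun (_ : Unit) j => Sum.elim (fun j' => ωf * h₁ j') (fun _ => (0 : ℝ)) j)
    (Matrix.of fun _ _ => -ωf)

/- ### Auxiliary lemmas -/

lemma eig_vec {m : Type} [Fintype m] [DecidableEq m] (A : Matrix m m ℝ) (μ : ℂ)
    (h : (((A.charpoly).map (algebraMap ℝ ℂ))).IsRoot μ) :
    ∃ v : m → ℂ, v ≠ 0 ∧ (A.map (algebraMap ℝ ℂ)) *ᵥ v = μ • v := by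
  rw [← Matrix.charpoly_map] at h
  have hdet : (μ • (1 : Matrix m m ℂ) - A.map (algebraMap ℝ ℂ)).det = 0 := by
    have h2 : ((A.map (algebraMap ℝ ℂ)).charpoly).eval μ = 0 := h
    rw [Matrix.charpoly, ← Polynomial.coe_evalRingHom, RingHom.map_det] at h2
    convert h2 using 2
    ext i j
    simp [Matrix.charmatrix_apply, Matrix.one_apply, Matrix.diagonal_apply, apply_ite]
  obtain ⟨v, hv0, hv⟩ := Matrix.exists_mulVec_eq_zero_iff.mpr hdet
  refine ⟨v, hv0, ?_⟩
  rw [sub_mulVec, smul_mulVec, one_mulVec, sub_eq_zero] at hv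
  exact hv.symm

lemma cast_pair {n : ℕ} (A : Matrix (Fin n) (Fin n) ℝ) (u w : Fin n → ℝ) :
    ((fun i => ((u i : ℂ))) ⬝ᵥ ((A.map (algebraMap ℝ ℂ)) *ᵥ (fun i => ((w i : ℂ))))) =
      ((u ⬝ᵥ (A *ᵥ w) : ℝ) : ℂ) := by
  simp only [dotProduct, mulVec, Matrix.map_apply, Complex.coe_algebraMap]
  push_cast
  rfl

lemma dot_symm {n : ℕ} (H : Matrix (Fin n) (Fin n) ℝ) (hsym : ∀ i j, H i j = H j i)
    (a b : Fin n → ℝ) : a ⬝ᵥ (H *ᵥ b) = b ⬝ᵥ (H *ᵥ a) := by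
  simp only [dotProduct, mulVec, Finset.mul_sum]
  rw [Finset.sum_comm]
  exact Finset.sum_congr rfl fun i _ => Finset.sum_congr rfl fun j _ => by rw [hsym j i]; ring

lemma posdef_pair {n : ℕ} {H : Matrix (Fin n) (Fin n) ℝ} (hH : H.PosDef)
    (x : Fin n → ℂ) (hx : x ≠ 0) :
    ∃ r : ℝ, 0 < r ∧ (star x ⬝ᵥ ((H.map (algebraMap ℝ ℂ)) *ᵥ x)) = (r : ℂ) := by
  set a : Fin n → ℝ := fun i => (x i).re with ha
  set b : Fin n → ℝ := fun i => (x i).im with hb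
  set ca : Fin n → ℂ := fun i => ((a i : ℂ)) with hca
  set cb : Fin n → ℂ := fun i => ((b i : ℂ)) with hcb
  have hxeq : x = ca + Complex.I • cb := by
    funext i
    simp [hca, hcb, ha, hb, Pi.add_apply, Pi.smul_apply, smul_eq_mul]
    rw [mul_comm, Complex.re_add_im]
  have hstar : star x = ca - Complex.I • cb := by
    funext i
    rw [hxeq]
    simp [hca, hcb, Complex.ext_iff]
  have hsym : ∀ i j, H i j = H j i := by
    intro i j
    have := hH.1
    rw [Matrix.IsHermitian] at this
    conv_lhs => rw [← this]
    simp [Matrix.conjTranspose_apply]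
  set Hc := H.map (algebraMap ℝ ℂ) with hHc
  have key : star x ⬝ᵥ (Hc *ᵥ x) = ((a ⬝ᵥ (H *ᵥ a) + b ⬝ᵥ (H *ᵥ b) : ℝ) : ℂ) := by
    rw [hstar, hxeq, mulVec_add, mulVec_smul]
    rw [dotProduct_add, sub_dotProduct, sub_dotProduct, dotProduct_smul, dotProduct_smul,
      smul_dotProduct, smul_dotProduct]
    rw [hca, hcb, cast_pair, cast_pair, cast_pair, cast_pair]
    rw [dot_symm H hsym b a]
    push_cast
    simp only [smul_eq_mul, ← mul_assoc, Complex.I_mul_I]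
    ring
  have hab : a ≠ 0 ∨ b ≠ 0 := by
    by_contra hcon
    push_neg at hcon
    apply hx
    funext i
    have h1 : a i = 0 := by rw [hcon.1]; rfl
    have h2 : b i = 0 := by rw [hcon.2]; rfl
    rw [ha] at h1; rw [hb] at h2
    simp only at h1 h2
    rw [Complex.ext_iff]
    exact ⟨h1, h2⟩
  have hpos : 0 < a ⬝ᵥ (H *ᵥ a) + b ⬝ᵥ (H *ᵥ b) := by
    have haa : 0 ≤ a ⬝ᵥ (H *ᵥ a) := by
      rcases eq_or_ne a 0 with h | h
      · simp [h]
      · have := hH.dotProduct_mulVec_pos h; simpa using this.le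
    have hbb : 0 ≤ b ⬝ᵥ (H *ᵥ b) := by
      rcases eq_or_ne b 0 with h | h
      · simp [h]
      · have := hH.dotProduct_mulVec_pos h; simpa using this.le
    rcases hab with h | h
    · have := hH.dotProduct_mulVec_pos h; simp only [star_trivial] at this; linarith
    · have := hH.dotProduct_mulVec_pos h; simp only [star_trivial] at this; linarith
  exact ⟨_, hpos, key⟩

lemma Mc_mulVec (n : ℕ) (k α : ℝ) (h₁ : Fin n → ℝ) (hN : 0 < h₁ ⬝ᵥ h₁) (u : Fin n → ℂ)
    (i : Fin n) :
    (((Mmat n k α h₁).map (algebraMap ℝ ℂ)) *ᵥ u) i =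
      (k : ℂ) * u i - ((k : ℂ) * (α : ℂ) / ((h₁ ⬝ᵥ h₁ : ℝ) : ℂ))
        * (∑ j, ((h₁ j : ℂ)) * u j) * ((h₁ i : ℂ)) := by
  set N : ℝ := h₁ ⬝ᵥ h₁ with hNdef
  have hr : ((Real.sqrt N)⁻¹ : ℝ) * (Real.sqrt N)⁻¹ = N⁻¹ := by
    rw [← mul_inv, Real.mul_self_sqrt hN.le]
  have hrc : (((Real.sqrt N : ℝ) : ℂ))⁻¹ * (((Real.sqrt N : ℝ) : ℂ))⁻¹ = ((N : ℂ))⁻¹ := by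
    rw [← Complex.ofReal_inv, ← Complex.ofReal_inv, ← Complex.ofReal_mul, hr,
      Complex.ofReal_inv]
  have hNc : ((N : ℂ)) ≠ 0 := by simpa using hN.ne'
  simp only [Mmat, hhat, Matrix.map_apply, Matrix.smul_apply, Matrix.sub_apply, Matrix.one_apply,
    Matrix.vecMulVec_apply, Pi.smul_apply, smul_eq_mul, mulVec, dotProduct, Complex.coe_algebraMap]
  push_cast
  simp only [show (∑ i : Fin n, h₁ i * h₁ i) = N from rfl]
  simp only [apply_ite Complex.ofReal, Complex.ofReal_one, Complex.ofReal_zero, mul_sub, sub_mul,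
    mul_ite, mul_one, mul_zero, ite_mul, zero_mul, Finset.sum_sub_distrib,
    Finset.sum_ite_eq, Finset.mem_univ, if_true]
  congr 1
  rw [Finset.mul_sum, Finset.sum_mul]
  refine Finset.sum_congr rfl fun j _ => ?_
  linear_combination ((k : ℂ) * (α : ℂ) * ((h₁ i : ℝ) : ℂ) * ((h₁ j : ℝ) : ℂ) * u j) * hrc

lemma endgame (μ : ℂ) (ω d e : ℝ) (hω : 0 < ω) (hd : 0 < d) (he : 0 < e)
    (h : (-μ * (μ + (ω : ℂ))) * (d : ℂ) = (e : ℂ)) : μ.re < 0 := by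
  have hdc : ((d : ℂ)) ≠ 0 := by simpa using hd.ne'
  have hcast : (((e / d : ℝ)) : ℂ) * (d : ℂ) = (e : ℂ) := by
    push_cast
    field_simp
  have h' : μ * μ + (ω : ℂ) * μ + ((e / d : ℝ) : ℂ) = 0 := by
    apply mul_right_cancel₀ hdc
    rw [zero_mul]
    linear_combination hcast - h
  have hσ : 0 < e / d := div_pos he hd
  have hre := congrArg Complex.re h'
  have him := congrArg Complex.im h'
  simp only [Complex.add_re, Complex.mul_re, Complex.mul_im, Complex.add_im,
    Complex.ofReal_re, Complex.ofReal_im, Complex.zero_re, Complex.zero_im,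
    zero_mul, mul_zero, sub_zero, add_zero, zero_add] at hre him
  rcases eq_or_ne μ.im 0 with hb | hb
  · rw [hb] at hre
    by_contra h0
    push_neg at h0
    nlinarith
  · have h2 : μ.im * (2 * μ.re + ω) = 0 := by linarith [him]
    have := (mul_eq_zero.mp h2).resolve_left hb
    linarith

/-- With `M = k(I − α ĥ₁ĥ₁ᵀ)`, `c̃ = cα/‖h₁‖²`, `H ≻ 0`, `k, c, ω_f > 0`,
`α ∈ [0,1]`, the matrix `X` is Hurwitz: every complex eigenvalue has
strictly negative real part. -/
theorem stmt4 (n : ℕ) (hn : 1 ≤ n) (k c ωf α : ℝ)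
    (hk : 0 < k) (hc : 0 < c) (hωf : 0 < ωf) (hα : α ∈ Set.Icc (0 : ℝ) 1)
    (h₁ : Fin n → ℝ) (hh₁ : h₁ ≠ 0)
    (H : Matrix (Fin n) (Fin n) ℝ) (hH : H.PosDef) :
    ∀ μ : ℂ, IsEig (Xmat n ωf (c * α / (h₁ ⬝ᵥ h₁)) h₁ (Mmat n k α h₁) H) μ → μ.re < 0 := by
  intro μ hμ
  obtain ⟨hα0, hα1⟩ := hα
  set N : ℝ := h₁ ⬝ᵥ h₁ with hNdef
  have hN : 0 < N := by
    rcases Function.ne_iff.mp hh₁ with ⟨i, hi⟩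
    exact Finset.sum_pos' (fun j _ => mul_self_nonneg _)
      ⟨i, Finset.mem_univ i, mul_self_pos.mpr hi⟩
  have hNc : ((N : ℂ)) ≠ 0 := by simpa using hN.ne'
  have hωc : ((ωf : ℂ)) ≠ 0 := by simpa using hωf.ne'
  set ct : ℝ := c * α / N with hctdef
  obtain ⟨v, hv0, hv⟩ := eig_vec _ μ hμ
  set x : Fin n → ℂ := fun i => v (Sum.inl (Sum.inl i)) with hxdef
  set y : Fin n → ℂ := fun i => v (Sum.inl (Sum.inr i)) with hydef
  set z0 : ℂ := v (Sum.inr ()) with hzdef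
  set Mc := (Mmat n k α h₁).map (algebraMap ℝ ℂ) with hMcdef
  set Hc := H.map (algebraMap ℝ ℂ) with hHcdef
  -- the three block equations
  have E1 : ∀ i, -((Mc *ᵥ y) i) - (ct : ℂ) * (h₁ i : ℂ) * z0 = μ * x i := by
    intro i
    have := congrFun hv (Sum.inl (Sum.inl i))
    simp [Xmat, mulVec, dotProduct, Fintype.sum_sum_type, Matrix.map_apply,
      Finset.sum_neg_distrib, neg_mul, Pi.smul_apply, smul_eq_mul] at this
    simp only [hMcdef, mulVec, dotProduct, Matrix.map_apply, Complex.coe_algebraMap]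
    simp only [mul_assoc] at this ⊢
    linear_combination this
  have E2 : ∀ i, (ωf : ℂ) * ((Hc *ᵥ x) i) - (ωf : ℂ) * y i = μ * y i := by
    intro i
    have := congrFun hv (Sum.inl (Sum.inr i))
    simp [Xmat, mulVec, dotProduct, Fintype.sum_sum_type, Matrix.map_apply,
      Pi.smul_apply, smul_eq_mul, Matrix.one_apply, Finset.mul_sum] at this
    simp only [apply_ite Complex.ofReal, Complex.ofReal_zero, ite_mul, zero_mul,
      Finset.sum_ite_eq, Finset.mem_univ, if_true] at this
    simp only [hHcdef, mulVec, dotProduct, Matrix.map_apply, Complex.coe_algebraMap,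
      Finset.mul_sum, mul_assoc] at this ⊢
    linear_combination this
  have E3 : (ωf : ℂ) * (∑ j, (h₁ j : ℂ) * x j) - (ωf : ℂ) * z0 = μ * z0 := by
    have := congrFun hv (Sum.inr ())
    simp [Xmat, mulVec, dotProduct, Fintype.sum_sum_type, Matrix.map_apply,
      Pi.smul_apply, smul_eq_mul] at this
    rw [Finset.mul_sum]
    simp only [mul_assoc] at this ⊢
    linear_combination this
  -- trivial case
  by_cases hcase : μ = -(ωf : ℂ)
  · rw [hcase]
    simpa using hωf
  have hμω : μ + (ωf : ℂ) ≠ 0 := by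
    intro h
    exact hcase (eq_neg_of_add_eq_zero_left h)
  set w : Fin n → ℂ := Hc *ᵥ x with hwdef
  set t : ℂ := ∑ j, (h₁ j : ℂ) * x j with htdef
  have E2' : ∀ i, (μ + (ωf : ℂ)) * y i = (ωf : ℂ) * w i := by
    intro i
    have := E2 i
    linear_combination -this
  have E3' : (μ + (ωf : ℂ)) * z0 = (ωf : ℂ) * t := by linear_combination -E3
  -- x ≠ 0
  have hx0 : x ≠ 0 := by
    intro hx
    apply hv0
    have hw0 : w = 0 := by rw [hwdef, hx, mulVec_zero]
    have hy0 : ∀ i, y i = 0 := by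
      intro i
      have := E2' i
      rw [hw0] at this
      simpa [hμω] using this
    have hz0 : z0 = 0 := by
      have ht0 : t = 0 := by simp [htdef, hx]
      have := E3'
      rw [ht0] at this
      simpa [hμω] using this
    funext j
    rcases j with (i | i) | u
    · exact congrFun hx i
    · exact hy0 i
    · cases u; exact hz0
  -- master vector equation
  set S : ℂ := -μ * (μ + (ωf : ℂ)) with hSdef
  set g : ℂ := ∑ j, (h₁ j : ℂ) * w j with hgdef
  set Λ : ℂ := (k : ℂ) * (α : ℂ) * g - (c : ℂ) * (α : ℂ) * t with hΛdef
  have hMcw : ∀ i, ((N : ℂ)) * ((Mc *ᵥ w) i) =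
      (N : ℂ) * (k : ℂ) * w i - (k : ℂ) * (α : ℂ) * g * (h₁ i : ℂ) := by
    intro i
    have h := Mc_mulVec n k α h₁ hN w i
    rw [← hNdef, ← hgdef] at h
    have hNinv : ((N : ℂ)) * ((N : ℂ))⁻¹ = 1 := mul_inv_cancel₀ hNc
    rw [← hMcdef] at h
    linear_combination (N : ℂ) * h - ((k : ℂ) * (α : ℂ) * g * ((h₁ i : ℝ) : ℂ)) * hNinv
  have hctN : ((ct : ℂ)) * (N : ℂ) = (c : ℂ) * (α : ℂ) := by
    rw [hctdef]
    push_cast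
    rw [div_mul_cancel₀]
    simpa using hN.ne'
  have hyMc : ∀ i, (μ + (ωf : ℂ)) * ((Mc *ᵥ y) i) = (ωf : ℂ) * ((Mc *ᵥ w) i) := by
    intro i
    have hsm0 : ((μ + (ωf : ℂ)) • y) = ((ωf : ℂ) • w) := by
      funext j
      show (μ + (ωf : ℂ)) * y j = (ωf : ℂ) * w j
      exact E2' j
    have hsm : Mc *ᵥ ((μ + (ωf : ℂ)) • y) = Mc *ᵥ ((ωf : ℂ) • w) := by rw [hsm0]
    have h1 := congrFun hsm i
    rw [mulVec_smul, mulVec_smul] at h1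
    simpa using h1
  have hV : ∀ i, (ωf : ℂ) * ((N : ℂ) * (k : ℂ) * w i) =
      (N : ℂ) * S * x i + (ωf : ℂ) * Λ * (h₁ i : ℂ) := by
    intro i
    have e1 := E1 i
    have hm := hyMc i
    have hmc := hMcw i
    have e3 := E3'
    rw [hΛdef, hSdef]
    linear_combination (-(μ + (ωf : ℂ)) * (N : ℂ)) * e1 - (N : ℂ) * hm - (ωf : ℂ) * hmc
      - ((N : ℂ) * (ct : ℂ) * (h₁ i : ℂ)) * e3 - ((ωf : ℂ) * t * (h₁ i : ℂ)) * hctN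
  -- summed equations
  have hsum3 : (∑ i, ((h₁ i : ℂ)) * ((h₁ i : ℂ))) = ((N : ℝ) : ℂ) := by
    rw [show ((N : ℝ) : ℂ) = ((∑ i, h₁ i * h₁ i : ℝ) : ℂ) from rfl]
    push_cast
    rfl
  have hi1 : (ωf : ℂ) * ((N : ℂ) * (k : ℂ) * g) = (N : ℂ) * S * t + (ωf : ℂ) * Λ * (N : ℂ) := by
    have h1 : ∑ i, ((h₁ i : ℂ)) * ((ωf : ℂ) * ((N : ℂ) * (k : ℂ) * w i))
        = ∑ i, ((h₁ i : ℂ)) * ((N : ℂ) * S * x i + (ωf : ℂ) * Λ * (h₁ i : ℂ)) :=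
      Finset.sum_congr rfl fun i _ => by rw [hV i]
    have l2 : ∑ i, ((h₁ i : ℂ)) * ((ωf : ℂ) * ((N : ℂ) * (k : ℂ) * w i))
        = (ωf : ℂ) * ((N : ℂ) * (k : ℂ) * g) := by
      simp only [hgdef, Finset.mul_sum]
      exact Finset.sum_congr rfl fun i _ => by ring
    have l3 : ∑ i, ((h₁ i : ℂ)) * ((N : ℂ) * S * x i + (ωf : ℂ) * Λ * (h₁ i : ℂ))
        = (N : ℂ) * S * t + (ωf : ℂ) * Λ * (N : ℂ) := by
      rw [htdef, ← hsum3]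
      simp only [mul_add, Finset.sum_add_distrib, Finset.mul_sum]
      congr 1
      · exact Finset.sum_congr rfl fun i _ => by ring
      · exact Finset.sum_congr rfl fun i _ => by ring
    rw [← l2, h1, l3]
  set ctc : ℂ := (starRingEnd ℂ) t with hctc
  have hconjt : ctc = ∑ i, (starRingEnd ℂ) (x i) * ((h₁ i : ℂ)) := by
    rw [hctc, htdef, map_sum]
    exact Finset.sum_congr rfl fun i _ => by rw [_root_.map_mul, Complex.conj_ofReal]; ring
  set XH : ℂ := ∑ i, (starRingEnd ℂ) (x i) * w i with hXHdef
  set X2 : ℂ := ∑ i, (starRingEnd ℂ) (x i) * x i with hX2def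
  have hB1 : (ωf : ℂ) * ((N : ℂ) * (k : ℂ) * XH) = (N : ℂ) * S * X2 + (ωf : ℂ) * Λ * ctc := by
    have h1 : ∑ i, (starRingEnd ℂ) (x i) * ((ωf : ℂ) * ((N : ℂ) * (k : ℂ) * w i))
        = ∑ i, (starRingEnd ℂ) (x i) * ((N : ℂ) * S * x i + (ωf : ℂ) * Λ * (h₁ i : ℂ)) :=
      Finset.sum_congr rfl fun i _ => by rw [hV i]
    have l2 : ∑ i, (starRingEnd ℂ) (x i) * ((ωf : ℂ) * ((N : ℂ) * (k : ℂ) * w i))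
        = (ωf : ℂ) * ((N : ℂ) * (k : ℂ) * XH) := by
      simp only [hXHdef, Finset.mul_sum]
      exact Finset.sum_congr rfl fun i _ => by ring
    have l3 : ∑ i, (starRingEnd ℂ) (x i) * ((N : ℂ) * S * x i + (ωf : ℂ) * Λ * (h₁ i : ℂ))
        = (N : ℂ) * S * X2 + (ωf : ℂ) * Λ * ctc := by
      rw [hconjt, hX2def]
      simp only [mul_add, Finset.sum_add_distrib, Finset.mul_sum]
      congr 1
      · exact Finset.sum_congr rfl fun i _ => by ring
      · exact Finset.sum_congr rfl fun i _ => by ring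
    rw [← l2, h1, l3]
  -- realness facts
  obtain ⟨R1, hR1pos, hR1⟩ := posdef_pair hH x hx0
  have hXHR : XH = ((R1 : ℝ) : ℂ) := by
    rw [← hR1, hXHdef]
    simp only [dotProduct, Pi.star_apply, Complex.star_def, hwdef, hHcdef]
  set R2 : ℝ := ∑ i, Complex.normSq (x i) with hR2def
  have hR2pos : 0 < R2 := by
    rcases Function.ne_iff.mp hx0 with ⟨i, hi⟩
    exact Finset.sum_pos' (fun j _ => Complex.normSq_nonneg _)
      ⟨i, Finset.mem_univ i, Complex.normSq_pos.mpr hi⟩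
  have hX2R : X2 = ((R2 : ℝ) : ℂ) := by
    rw [hX2def, hR2def]
    push_cast
    exact Finset.sum_congr rfl fun i _ => by rw [mul_comm, Complex.mul_conj]
  set T0 : ℝ := Complex.normSq t with hT0def
  have hT0nn : 0 ≤ T0 := Complex.normSq_nonneg _
  have hT : t * ctc = ((T0 : ℝ) : ℂ) := by rw [hctc, hT0def]; exact Complex.mul_conj t
  -- cancel N in hi1
  have hi2 : (ωf : ℂ) * ((k : ℂ) * g) = S * t + (ωf : ℂ) * Λ := by
    apply mul_left_cancel₀ hNc
    linear_combination hi1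
  rw [hXHR, hX2R] at hB1
  -- case split on α
  rcases eq_or_lt_of_le hα1 with hα1' | hα1'
  · -- α = 1
    rcases eq_or_ne t 0 with ht0 | ht0
    · -- t = 0 case : S * (N*R2) = ωf*(N*(k*R1))
      have hct0 : ctc = 0 := by rw [hctc, ht0, map_zero]
      have hfinal : S * ((N * R2 : ℝ) : ℂ) = ((ωf * (N * (k * R1)) : ℝ) : ℂ) := by
        push_cast
        rw [hct0] at hB1
        linear_combination -hB1
      rw [hSdef] at hfinal
      exact endgame μ ωf (N * R2) (ωf * (N * (k * R1))) hωf (by positivity) (by positivity) hfinal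
    · -- t ≠ 0 : S = ωf * c
      have hkey : (S - (ωf : ℂ) * (c : ℂ)) * t = 0 := by
        rw [hΛdef, hα1'] at hi2
        push_cast at hi2 ⊢
        linear_combination -hi2
      have hS1 : S - (ωf : ℂ) * (c : ℂ) = 0 := (mul_eq_zero.mp hkey).resolve_right ht0
      have hfinal : S * (((1 : ℝ)) : ℂ) = ((ωf * c : ℝ) : ℂ) := by
        push_cast
        linear_combination hS1
      rw [hSdef] at hfinal
      exact endgame μ ωf 1 (ωf * c) hωf one_pos (by positivity) hfinal
  · -- α < 1
    have h1α : 0 < 1 - α := by linarith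
    have hd : 0 < (1 - α) * (N * R2) + α * T0 := by
      have : 0 < (1 - α) * (N * R2) := by positivity
      nlinarith [mul_nonneg hα0 hT0nn]
    have he : 0 < ωf * ((1 - α) * (N * (k * R1)) + c * (α * T0)) := by
      have h2 : 0 < (1 - α) * (N * (k * R1)) := by positivity
      have h3 : 0 ≤ c * (α * T0) := by positivity
      have : 0 < (1 - α) * (N * (k * R1)) + c * (α * T0) := by linarith
      positivity
    have hfinal : S * (((1 - α) * (N * R2) + α * T0 : ℝ) : ℂ)
        = ((ωf * ((1 - α) * (N * (k * R1)) + c * (α * T0)) : ℝ) : ℂ) := by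
      rw [hΛdef] at hB1 hi2
      push_cast
      linear_combination (-(1 - (α : ℂ))) * hB1 - ((α : ℂ) * ctc) * hi2
        - ((α : ℂ) * S - (ωf : ℂ) * (c : ℂ) * (α : ℂ)) * hT
    rw [hSdef] at hfinal
    exact endgame μ ωf _ _ hωf hd he hfinal
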